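/- arXiv:1601.00611 — 3 statements merged into one kernel-verified Lean document; each statement's English description precedes it below -/
import Mathlib

section
/- Let Q be an 𝔪_ξ-primary ideal with orthogonal primal-dual bases B = {(x−ξ)^{αᵢ}} and Λ = {Λᵢ} as in the orthogonal primal-dual basis lemma, with exponent set E. Then the transpose of the matrix M_i of multiplication by (xᵢ − ξᵢ) on ℂ[x]/Q in the basis B is strictly upper triangular with entries (M_i^t)_{k,j} = ν_{α_j, α_k + e_i}, the coefficient of (1/(α_k+e_i)!)∂_ξ^{α_k+e_i} in Λ_j; moreover ν_{α_j, α_k+e_i} = 1 if α_j = α_k + e_i, and 0 if α_k + e_i ∈ E with α_j ≠ α_k + e_i. -/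
open MvPolynomial

noncomputable section

/-- Iterated partial derivative operator `∂^β` on polynomials. -/
def pdiff {n : ℕ} {K : Type} [CommSemiring K] (β : Fin n →₀ ℕ) :
    Module.End K (MvPolynomial (Fin n) K) :=
  (List.ofFn fun i : Fin n =>
    ((MvPolynomial.pderiv i : Derivation K _ _).toLinearMap ^ (β i))).prod

/-- Action of a polynomial differential operator at the point ξ:
`Λ = Σ_β c_β ∂^β ↦ (p ↦ Σ_β c_β (∂^β p)(ξ))`. -/
def dapply {n : ℕ} (ξ : Fin n → ℂ) (Λ : (Fin n →₀ ℕ) →₀ ℂ)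
    (p : MvPolynomial (Fin n) ℂ) : ℂ :=
  Λ.sum fun β c => c * eval ξ (pdiff β p)

def dapplyL {n : ℕ} (ξ : Fin n → ℂ) (p : MvPolynomial (Fin n) ℂ) :
    ((Fin n →₀ ℕ) →₀ ℂ) →ₗ[ℂ] ℂ where
  toFun Λ := dapply ξ Λ p
  map_add' a b := Finsupp.sum_add_index' (fun β => zero_mul _)
    (fun β c d => add_mul c d _)
  map_smul' c a := by
    classical
    simp only [RingHom.id_apply, smul_eq_mul, dapply]
    rw [Finsupp.sum_smul_index fun β => zero_mul ((eval ξ) ((pdiff β) p)), Finsupp.mul_sum]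
    exact Finsupp.sum_congr fun β _ => mul_assoc _ _ _

/-- The space `I^⊥ ∩ ℂ[∂_ξ]` of polynomial differential operators at ξ
annihilating the ideal `I`. -/
def dualSpace {n : ℕ} (I : Ideal (MvPolynomial (Fin n) ℂ)) (ξ : Fin n → ℂ) :
    Submodule ℂ ((Fin n →₀ ℕ) →₀ ℂ) :=
  ⨅ p ∈ I, LinearMap.ker (dapplyL ξ p)

lemma mem_dualSpace {n : ℕ} {I : Ideal (MvPolynomial (Fin n) ℂ)} {ξ : Fin n → ℂ}
    {Λ : (Fin n →₀ ℕ) →₀ ℂ} : Λ ∈ dualSpace I ξ ↔ ∀ p ∈ I, dapply ξ Λ p = 0 := by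
  simp only [dualSpace, Submodule.mem_iInf, LinearMap.mem_ker]
  rfl

/-- The multiplicity of ξ as a root of I. -/
def mult {n : ℕ} (I : Ideal (MvPolynomial (Fin n) ℂ)) (ξ : Fin n → ℂ) : ℕ :=
  Module.finrank ℂ (dualSpace I ξ)

/-- Order (total degree in the ∂ variables) of a polynomial differential operator. -/
def ordD {n : ℕ} (Λ : (Fin n →₀ ℕ) →₀ ℂ) : ℕ :=
  Λ.support.sup fun β => β.sum fun _ k => k

/-- The nil-index of I at ξ: maximal order of elements of the dual space. -/
def nilIndex {n : ℕ} (I : Ideal (MvPolynomial (Fin n) ℂ)) (ξ : Fin n → ℂ) : ℕ :=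
  sSup {t | ∃ Λ ∈ dualSpace I ξ, Λ ≠ 0 ∧ ordD Λ = t}

/-- The maximal ideal at ξ. -/
def maxIdeal {n : ℕ} (ξ : Fin n → ℂ) : Ideal (MvPolynomial (Fin n) ℂ) :=
  Ideal.span (Set.range fun i => X i - C (ξ i))

/-- `(x-ξ)^α`. -/
def xpow {n : ℕ} (ξ : Fin n → ℂ) (α : Fin n →₀ ℕ) : MvPolynomial (Fin n) ℂ :=
  ∏ i : Fin n, (X i - C (ξ i)) ^ (α i)

/-- multi-index factorial -/
def mfact {n : ℕ} (β : Fin n →₀ ℕ) : ℕ := ∏ i : Fin n, Nat.factorial (β i)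

def mdeg {n : ℕ} (β : Fin n →₀ ℕ) : ℕ := β.sum fun _ k => k

/-! Since `Λⱼ` annihilates `Q` and pairs with the basis `(x-ξ)^{αₖ}` by `δⱼₖ`, it is the `j`-th
coordinate functional of `b`. The `(j,k)` entry of `Mᵢ` is the `j`-th coordinate of
`(xᵢ-ξᵢ)(x-ξ)^{αₖ} = (x-ξ)^{αₖ+eᵢ}`, hence `Λⱼ((x-ξ)^{αₖ+eᵢ})`. As `∂^γ (x-ξ)^β` vanishes at `ξ`
unless `γ = β`, where it equals `β!`, this is `ν_{αⱼ,αₖ+eᵢ}`. Triangularity is then the degree bound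
on the support of `Λⱼ`, and the special values are the pairing `Λⱼ((x-ξ)^{αₗ}) = δⱼₗ`. -/

section

variable {n : ℕ} (ξ : Fin n → ℂ)

lemma pderiv_prod_erase_X_sub_C_pow (i : Fin n) (β : Fin n →₀ ℕ) :
    pderiv i (∏ j ∈ Finset.univ.erase i, (X j - C (ξ j)) ^ β j) = 0 := by
  refine pderiv_eq_zero_of_notMem_vars fun hi => ?_
  obtain ⟨j, hj, hij⟩ := Finset.mem_biUnion.1 (vars_prod _ hi)
  have := vars_sub_subset (p := X j) (q := C (ξ j)) (vars_pow _ _ hij)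
  simp only [vars_X, vars_C, Finset.union_empty, Finset.mem_singleton] at this
  exact Finset.ne_of_mem_erase hj this.symm

lemma xpow_eq_mul_prod_erase (i : Fin n) (β : Fin n →₀ ℕ) :
    xpow ξ β = (X i - C (ξ i)) ^ β i * ∏ j ∈ Finset.univ.erase i, (X j - C (ξ j)) ^ β j :=
  (Finset.mul_prod_erase _ _ (Finset.mem_univ i)).symm

lemma pderiv_xpow (i : Fin n) (β : Fin n →₀ ℕ) :
    pderiv i (xpow ξ β) = (β i : ℂ) • xpow ξ (β - Finsupp.single i 1) := by
  have hrest : ∏ j ∈ Finset.univ.erase i, (X j - C (ξ j)) ^ (β - Finsupp.single i 1 : Fin n →₀ ℕ) j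
      = ∏ j ∈ Finset.univ.erase i, (X j - C (ξ j)) ^ β j :=
    Finset.prod_congr rfl fun j hj => by
      simp [(Finset.ne_of_mem_erase hj).symm]
  rw [xpow_eq_mul_prod_erase ξ i, xpow_eq_mul_prod_erase ξ i, hrest, Derivation.leibniz,
    pderiv_prod_erase_X_sub_C_pow, pderiv_pow]
  simp only [smul_eq_mul, mul_zero, zero_add, map_sub, pderiv_X, Pi.single_eq_same, derivation_C,
    sub_zero, mul_one, Finsupp.coe_tsub, Pi.sub_apply, Finsupp.single_eq_same, smul_eq_C_mul,
    map_natCast]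
  ring

lemma pderiv_pow_xpow (i : Fin n) (k : ℕ) (β : Fin n →₀ ℕ) :
    ((pderiv i : Derivation ℂ _ _).toLinearMap ^ k) (xpow ξ β)
      = ((β i).descFactorial k : ℂ) • xpow ξ (β - Finsupp.single i k) := by
  induction k with
  | zero => simp
  | succ k ih =>
    rw [pow_succ', Module.End.mul_apply, ih, map_smul, Derivation.coeFn_coe, pderiv_xpow,
      smul_smul, tsub_tsub, ← Finsupp.single_add, Nat.descFactorial_succ]
    simp [mul_comm]

lemma list_prod_pderiv_pow_xpow (γ β : Fin n →₀ ℕ) (l : List (Fin n)) (hl : l.Nodup) :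
    (l.map fun i => (pderiv i : Derivation ℂ _ _).toLinearMap ^ γ i).prod (xpow ξ β)
      = (∏ i ∈ l.toFinset, ((β i).descFactorial (γ i) : ℂ)) •
        xpow ξ (β - ∑ i ∈ l.toFinset, Finsupp.single i (γ i)) := by
  induction l with
  | nil => simp
  | cons a l ih =>
    obtain ⟨ha, hl⟩ := List.nodup_cons.mp hl
    have ha' : a ∉ l.toFinset := by simpa using ha
    have hβa : (β - ∑ i ∈ l.toFinset, Finsupp.single i (γ i)) a = β a := by
      simp [Finsupp.single_apply, ha]
    rw [List.map_cons, List.prod_cons, Module.End.mul_apply, ih hl, map_smul, pderiv_pow_xpow,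
      hβa, smul_smul, List.toFinset_cons, Finset.prod_insert ha', Finset.sum_insert ha', tsub_tsub,
      add_comm (Finsupp.single a _), mul_comm]

lemma pdiff_xpow (γ β : Fin n →₀ ℕ) :
    pdiff γ (xpow ξ β) = (∏ i, ((β i).descFactorial (γ i) : ℂ)) • xpow ξ (β - γ) := by
  rw [pdiff, List.ofFn_eq_map, list_prod_pderiv_pow_xpow ξ γ β _ (List.nodup_finRange n),
    List.toFinset_finRange, Finsupp.univ_sum_single]

lemma eval_xpow (β : Fin n →₀ ℕ) : eval ξ (xpow ξ β) = if β = 0 then 1 else 0 := by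
  simp only [xpow, map_prod, map_pow, map_sub, eval_X, eval_C, sub_self]
  split_ifs with hβ
  · simp [hβ]
  · obtain ⟨i, hi⟩ := Finsupp.ne_iff.mp hβ
    exact Finset.prod_eq_zero (Finset.mem_univ i) (zero_pow hi)

lemma eval_pdiff_xpow (γ β : Fin n →₀ ℕ) :
    eval ξ (pdiff γ (xpow ξ β)) = if γ = β then (mfact β : ℂ) else 0 := by
  rw [pdiff_xpow, smul_eval, eval_xpow]
  by_cases hγβ : γ = β
  · simp [hγβ, mfact, Nat.descFactorial_self]
  rw [if_neg hγβ, mul_eq_zero]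
  by_cases hle : β ≤ γ
  · obtain ⟨i, hi⟩ : ∃ i, β i < γ i := by
      by_contra! h
      exact hγβ (le_antisymm (fun i => h i) hle)
    exact .inl <| Finset.prod_eq_zero (Finset.mem_univ i) <| by
      rw [Nat.descFactorial_eq_zero_iff_lt.mpr hi, Nat.cast_zero]
  · exact .inr <| if_neg <| by rwa [tsub_eq_zero_iff_le]

lemma dapply_xpow (Λ : (Fin n →₀ ℕ) →₀ ℂ) (β : Fin n →₀ ℕ) :
    dapply ξ Λ (xpow ξ β) = Λ β * mfact β := by
  simp only [dapply, eval_pdiff_xpow, mul_ite, mul_zero]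
  rw [Finsupp.sum_ite_eq']
  split_ifs with hβ
  · rfl
  · rw [Finsupp.notMem_support_iff.mp hβ, zero_mul]

lemma xpow_add_single (i : Fin n) (β : Fin n →₀ ℕ) :
    xpow ξ (β + Finsupp.single i 1) = (X i - C (ξ i)) * xpow ξ β := by
  have hrest : ∏ j ∈ Finset.univ.erase i, (X j - C (ξ j)) ^ (β + Finsupp.single i 1 : Fin n →₀ ℕ) j
      = ∏ j ∈ Finset.univ.erase i, (X j - C (ξ j)) ^ β j :=
    Finset.prod_congr rfl fun j hj => by simp [(Finset.ne_of_mem_erase hj).symm]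
  rw [xpow_eq_mul_prod_erase ξ i, xpow_eq_mul_prod_erase ξ i β, hrest, Finsupp.add_apply,
    Finsupp.single_eq_same, pow_succ']
  ring

end

lemma mdeg_add_single {n : ℕ} (i : Fin n) (β : Fin n →₀ ℕ) :
    mdeg (β + Finsupp.single i 1) = mdeg β + 1 := by
  rw [mdeg, mdeg, Finsupp.sum_add_index' (fun _ => rfl) (fun _ _ _ => rfl),
    Finsupp.sum_single_index rfl]

def dapplyLinear {n : ℕ} (ξ : Fin n → ℂ) (Λ : (Fin n →₀ ℕ) →₀ ℂ) :
    MvPolynomial (Fin n) ℂ →ₗ[ℂ] ℂ where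
  toFun := dapply ξ Λ
  map_add' p q := by
    simp only [dapply, map_add, mul_add]
    exact Finsupp.sum_add
  map_smul' c p := by
    simp only [dapply, map_smul, smul_eval, RingHom.id_apply, smul_eq_mul, Finsupp.mul_sum]
    exact Finsupp.sum_congr fun _ _ => mul_left_comm _ _ _

lemma Module.Basis.apply_eq_repr_mk {K A ι : Type*} [CommRing K] [CommRing A] [Algebra K A]
    [Fintype ι] [DecidableEq ι] {Q : Ideal A} (b : Module.Basis ι K (A ⧸ Q)) (v : ι → A)
    (hb : ∀ k, b k = Ideal.Quotient.mk Q (v k)) (f : A →ₗ[K] K) (hfQ : ∀ p ∈ Q, f p = 0)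
    (j : ι) (hf : ∀ k, f (v k) = if j = k then 1 else 0) (p : A) :
    f p = b.repr (Ideal.Quotient.mk Q p) j := by
  set c := b.repr (Ideal.Quotient.mk Q p)
  have hmem : p - ∑ k, c k • v k ∈ Q := by
    rw [← Ideal.Quotient.eq_zero_iff_mem, ← Ideal.Quotient.mkₐ_eq_mk K, map_sub, map_sum]
    simp only [map_smul, Ideal.Quotient.mkₐ_eq_mk, ← hb]
    rw [b.sum_repr, sub_self]
  rw [sub_eq_zero.mp ((map_sub f _ _).symm.trans (hfQ _ hmem)), map_sum]
  simp [hf]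

theorem multiplication_matrix_structure_general {n δ : ℕ}
    (Q : Ideal (MvPolynomial (Fin n) ℂ)) (ξ : Fin n → ℂ)
    (α : Fin δ → (Fin n →₀ ℕ)) (Λ : Fin δ → ((Fin n →₀ ℕ) →₀ ℂ))
    (b : Module.Basis (Fin δ) ℂ (MvPolynomial (Fin n) ℂ ⧸ Q))
    (hb : ∀ i, b i = Ideal.Quotient.mk Q (xpow ξ (α i)))
    (hdual : ∀ i, ∀ p ∈ Q, dapply ξ (Λ i) p = 0)
    (hsupp : ∀ i β, β ∈ (Λ i).support →
      mdeg β ≤ mdeg (α i) ∧ (β = α i ∨ β ∉ Set.range α))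
    (hpair : ∀ i j, dapply ξ (Λ i) (xpow ξ (α j)) = if i = j then 1 else 0)
    (hord : ∀ i j, i ≤ j → mdeg (α i) ≤ mdeg (α j)) :
    -- ν_{αⱼ,β} : the coefficient of (1/β!)∂^β in Λⱼ
    let ν : Fin δ → (Fin n →₀ ℕ) → ℂ := fun j β => (Λ j) β * (mfact β : ℂ)
    -- Mᵢ : matrix of multiplication by (xᵢ−ξᵢ) on ℂ[x]/Q in the basis b
    let M : Fin n → Matrix (Fin δ) (Fin δ) ℂ := fun i =>
      LinearMap.toMatrix b b
        (LinearMap.mulLeft ℂ (Ideal.Quotient.mk Q (X i - C (ξ i))))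
    -- entries of the multiplication matrices are the dual coefficients
    (∀ (i : Fin n) (j k : Fin δ),
      M i j k = ν j (α k + Finsupp.single i 1)) ∧
    -- strict (transposed upper) triangularity
    (∀ (i : Fin n) (j k : Fin δ), j ≤ k → M i j k = 0) ∧
    -- the special values of ν
    (∀ (i : Fin n) (j k : Fin δ), α j = α k + Finsupp.single i 1 →
      ν j (α k + Finsupp.single i 1) = 1) ∧
    (∀ (i : Fin n) (j k : Fin δ), (α k + Finsupp.single i 1) ∈ Set.range α →
      α j ≠ α k + Finsupp.single i 1 → ν j (α k + Finsupp.single i 1) = 0) := by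
  intro ν M
  have hν : ∀ j l, ν j (α l) = if j = l then 1 else 0 := fun j l =>
    (dapply_xpow ξ (Λ j) (α l)).symm.trans (hpair j l)
  have hM : ∀ i j k, M i j k = ν j (α k + Finsupp.single i 1) := fun i j k => by
    dsimp only [M]
    rw [LinearMap.toMatrix_apply, LinearMap.mulLeft_apply, hb k, ← map_mul, ← xpow_add_single,
      ← b.apply_eq_repr_mk _ hb (dapplyLinear ξ (Λ j)) (hdual j) j (hpair j)]
    exact dapply_xpow ξ (Λ j) _
  refine ⟨hM, fun i j k hjk => ?_, fun i j k h => ?_, fun i j k ⟨l, hl⟩ hne => ?_⟩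
  · have hzero : Λ j (α k + Finsupp.single i 1) = 0 := Finsupp.notMem_support_iff.mp fun hmem => by
      have hdeg := (hsupp j _ hmem).1
      rw [mdeg_add_single] at hdeg
      exact absurd (hord j k hjk) (by omega)
    simp only [hM, ν, hzero, zero_mul]
  · rw [← h, hν, if_pos rfl]
  · rw [← hl, hν, if_neg]
    rintro rfl
    exact hne hl

/-- structure of the multiplication matrices.  In the orthogonal
primal-dual pair of bases `B`, `Λ` of `ℂ[x]/Q` and its dual, the matrix of
multiplication by `(xᵢ−ξᵢ)` satisfies `(Mᵢ)_{j,k} = ν_{αⱼ, α_k + eᵢ}` (the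
coefficient of `(1/(α_k+eᵢ)!)∂^{α_k+eᵢ}` in `Λⱼ`); its transpose is strictly
upper triangular, and `ν_{αⱼ, α_k+eᵢ} = 1` if `αⱼ = α_k + eᵢ`, `= 0` if
`α_k + eᵢ ∈ E` with `αⱼ ≠ α_k + eᵢ`. -/
theorem multiplication_matrix_structure {n δ : ℕ} (hδ : 0 < δ)
    (Q : Ideal (MvPolynomial (Fin n) ℂ)) (ξ : Fin n → ℂ)
    (hprim : Q.IsPrimary) (hrad : Q.radical = maxIdeal ξ)
    (α : Fin δ → (Fin n →₀ ℕ)) (Λ : Fin δ → ((Fin n →₀ ℕ) →₀ ℂ))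
    (b : Module.Basis (Fin δ) ℂ (MvPolynomial (Fin n) ℂ ⧸ Q))
    (hb : ∀ i, b i = Ideal.Quotient.mk Q (xpow ξ (α i)))
    (h0 : α ⟨0, hδ⟩ = 0)
    (hdual : ∀ i, ∀ p ∈ Q, dapply ξ (Λ i) p = 0)
    (hlead : ∀ i, (Λ i) (α i) = (mfact (α i) : ℂ)⁻¹)
    (hsupp : ∀ i β, β ∈ (Λ i).support →
      mdeg β ≤ mdeg (α i) ∧ (β = α i ∨ β ∉ Set.range α))
    (hpair : ∀ i j, dapply ξ (Λ i) (xpow ξ (α j)) = if i = j then 1 else 0)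
    (hord : ∀ i j, i ≤ j → mdeg (α i) ≤ mdeg (α j)) :
    -- ν_{αⱼ,β} : the coefficient of (1/β!)∂^β in Λⱼ
    let ν : Fin δ → (Fin n →₀ ℕ) → ℂ := fun j β => (Λ j) β * (mfact β : ℂ)
    -- Mᵢ : matrix of multiplication by (xᵢ−ξᵢ) on ℂ[x]/Q in the basis b
    let M : Fin n → Matrix (Fin δ) (Fin δ) ℂ := fun i =>
      LinearMap.toMatrix b b
        (LinearMap.mulLeft ℂ (Ideal.Quotient.mk Q (X i - C (ξ i))))
    -- entries of the multiplication matrices are the dual coefficients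
    (∀ (i : Fin n) (j k : Fin δ),
      M i j k = ν j (α k + Finsupp.single i 1)) ∧
    -- strict (transposed upper) triangularity
    (∀ (i : Fin n) (j k : Fin δ), j ≤ k → M i j k = 0) ∧
    -- the special values of ν
    (∀ (i : Fin n) (j k : Fin δ), α j = α k + Finsupp.single i 1 →
      ν j (α k + Finsupp.single i 1) = 1) ∧
    (∀ (i : Fin n) (j k : Fin δ), (α k + Finsupp.single i 1) ∈ Set.range α →
      α j ≠ α k + Finsupp.single i 1 → ν j (α k + Finsupp.single i 1) = 0) :=
  multiplication_matrix_structure_general Q ξ α Λ b hb hdual hsupp hpair hord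

end
end

section
/- Let M₁(μ),…,Mₙ(μ) be the parametric multiplication matrices over K[μ] associated to an exponent set E connected to 1, and define the parametric normal form N_{z,μ}(p) = Σ_γ (1/γ!)∂_z^γ(p)·M(μ)^γ[1] ∈ K[z,μ]^δ, where [1] = (1,0,…,0)^t. Then for every p ∈ K[x] and every i, N_{z,μ}(xᵢ·p) = zᵢ·N_{z,μ}(p) + Mᵢ(μ)·N_{z,μ}(p) + O_{i,μ}(p), where O_{i,μ} is a K-linear map from K[x] to vectors with entries in the commutator ideal C generated by the entries of Mᵢ(μ)Mⱼ(μ) − Mⱼ(μ)Mᵢ(μ) for all i,j. -/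
open MvPolynomial

noncomputable section

/-- Pairs `(j, β)` indexing the free parameters `μ_{α_j,β}` of the parametric
multiplication matrices: `β = α_k + e_i` lies outside `E` and `|α_k| < |α_j|`. -/
def UsedPair {n δ : ℕ} (α : Fin δ → (Fin n →₀ ℕ))
    (p : Fin δ × (Fin n →₀ ℕ)) : Prop :=
  ∃ (k : Fin δ) (i : Fin n), p.2 = α k + Finsupp.single i 1 ∧
    (∀ l, α l ≠ p.2) ∧ mdeg (α k) < mdeg (α p.1)

open Classical in
/-- The parametric multiplication matrix `Mᵢ(μ)` associated to the exponent
set `E = {α₀,…,α_{δ−1}}`: entry `(j,k)` is `1` if `α_j = α_k + e_i`, `0` if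
`α_k + e_i ∈ E` with `α_j ≠ α_k + e_i`, the fresh variable `μ_{α_j, α_k+e_i}`
if `|α_k| < |α_j|`, and `0` otherwise (strict triangular structure). -/
noncomputable def pmm {n δ : ℕ} (α : Fin δ → (Fin n →₀ ℕ)) (K : Type)
    [CommSemiring K] (i : Fin n) :
    Matrix (Fin δ) (Fin δ) (MvPolynomial (Subtype (UsedPair α)) K) :=
  Matrix.of fun j k =>
    if α j = α k + Finsupp.single i 1 then 1
    else if h2 : ∃ l, α l = α k + Finsupp.single i 1 then 0
    else if h3 : mdeg (α k) < mdeg (α j) then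
      MvPolynomial.X ⟨(j, α k + Finsupp.single i 1),
        k, i, rfl, fun l hl => h2 ⟨l, hl⟩, h3⟩
    else 0

/-- The parametric multiplication matrix viewed in `K[z,μ]`
(`z`-variables in the left summand, `μ`-variables in the right summand). -/
noncomputable def pmmT {n δ : ℕ} (α : Fin δ → (Fin n →₀ ℕ)) (K : Type)
    [CommSemiring K] (i : Fin n) :
    Matrix (Fin δ) (Fin δ)
      (MvPolynomial ((Fin n) ⊕ (Subtype (UsedPair α))) K) :=
  (pmm α K i).map (rename Sum.inr)

/-- `M(μ)^γ = M₁(μ)^{γ₁}⋯Mₙ(μ)^{γₙ}` in the fixed order of the indices. -/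
noncomputable def pmmPowT {n δ : ℕ} (α : Fin δ → (Fin n →₀ ℕ)) (K : Type)
    [CommSemiring K] (γ : Fin n →₀ ℕ) :
    Matrix (Fin δ) (Fin δ)
      (MvPolynomial ((Fin n) ⊕ (Subtype (UsedPair α))) K) :=
  (List.ofFn fun i : Fin n => (pmmT α K i) ^ (γ i)).prod

/-- The parametric normal form `N_{z,μ}(p) = Σ_γ (1/γ!)∂^γ(p)·M(μ)^γ[1]`,
an element of `K[z,μ]^δ`; the sum is finite since `M(μ)^γ = 0` for `|γ| ≥ δ`,
so it is truncated at coordinatewise bound δ. -/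
noncomputable def pnf {n δ : ℕ} [NeZero δ] (α : Fin δ → (Fin n →₀ ℕ))
    (K : Type) [Field K] (p : MvPolynomial (Fin n) K) :
    Fin δ → MvPolynomial ((Fin n) ⊕ (Subtype (UsedPair α))) K := fun j =>
  ∑ γ ∈ Finset.Iic (Finsupp.equivFunOnFinite.symm fun _ : Fin n => δ),
    (mfact γ : K)⁻¹ •
      (rename Sum.inl (pdiff γ p) *
        (pmmPowT α K γ).mulVec (Pi.single 0 1) j)

/-- The commutator ideal `C`, generated by the entries of
`Mᵢ(μ)Mⱼ(μ) − Mⱼ(μ)Mᵢ(μ)`. -/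
noncomputable def commIdeal {n δ : ℕ} (α : Fin δ → (Fin n →₀ ℕ)) (K : Type)
    [CommRing K] :
    Ideal (MvPolynomial ((Fin n) ⊕ (Subtype (UsedPair α))) K) :=
  Ideal.span {t | ∃ (i i' : Fin n) (j k : Fin δ),
    t = (pmmT α K i * pmmT α K i' - pmmT α K i' * pmmT α K i) j k}

/-! By Leibniz, `∂^γ(xᵢ p) = xᵢ ∂^γ p + γᵢ ∂^{γ-eᵢ} p`, so after the shift `γ = β + eᵢ`
`N(xᵢ p) = zᵢ N(p) + Σ_β (1/β!) ∂^β p · M^{β+eᵢ}[1]`. The truncation of the sum at `δ` does not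
spoil the shift because each `Mᵢ` is strictly triangular for the weight `j ↦ |α_j|`, hence
`Mᵢ^δ = 0`. Modulo the commutator ideal the `Mⱼ` commute, so `M^{β+eᵢ} ≡ Mᵢ M^β`, and
`O(p) = Σ_β (1/β!) ∂^β p · (M^{β+eᵢ} - Mᵢ M^β)[1]` collects the error. -/

open scoped Matrix

section MultiPow

variable {M : Type*} [Monoid M] {n : ℕ}

def multiPow (a : Fin n → M) (β : Fin n →₀ ℕ) : M :=
  (List.ofFn fun l => a l ^ β l).prod

theorem multiPow_zero (a : Fin n → M) : multiPow a 0 = 1 := by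
  simp [multiPow]

theorem map_multiPow {N F : Type*} [Monoid N] [FunLike F M N] [MonoidHomClass F M N] (f : F)
    (a : Fin n → M) (β : Fin n →₀ ℕ) : f (multiPow a β) = multiPow (fun l => f (a l)) β := by
  simp [multiPow, map_list_prod, List.map_ofFn, Function.comp_def]

theorem multiPow_eq_prod {M : Type*} [CommMonoid M] (a : Fin n → M) (β : Fin n →₀ ℕ) :
    multiPow a β = ∏ l, a l ^ β l :=
  List.prod_ofFn

open scoped IsMulCommutative in
theorem multiPow_add (a : Fin n → M) (ha : ∀ l l', Commute (a l) (a l')) (β γ : Fin n →₀ ℕ) :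
    multiPow a (β + γ) = multiPow a β * multiPow a γ := by
  let S := Submonoid.closure (Set.range a)
  have : IsMulCommutative S := Submonoid.isMulCommutative_closure _ <| by
    rintro _ ⟨l, rfl⟩ _ ⟨l', rfl⟩
    exact ha l l'
  let a' : Fin n → S := fun l => ⟨a l, Submonoid.subset_closure ⟨l, rfl⟩⟩
  have hcoe : ∀ β, multiPow a β = S.subtype (multiPow a' β) := fun β =>
    (map_multiPow S.subtype a' β).symm
  simp only [hcoe, ← map_mul, multiPow_eq_prod, Finsupp.add_apply, pow_add, Finset.prod_mul_distrib]

theorem multiPow_single (a : Fin n → M) (i : Fin n) :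
    multiPow a (Finsupp.single i 1) = a i := by
  have h : (fun l => a l ^ Finsupp.single i 1 l) = (a i ^ ·) ∘ Finsupp.single i 1 := by
    funext l
    rcases eq_or_ne l i with rfl | hl <;> simp [*]
  have hpow : ∀ L : List ℕ, (L.map (a i ^ ·)).prod = a i ^ L.sum := fun L => by
    induction L <;> simp [pow_add, *]
  rw [multiPow, h, ← List.map_ofFn, hpow, List.sum_ofFn]
  simp

theorem multiPow_eq_zero {M : Type*} [MonoidWithZero M] (a : Fin n → M) {β : Fin n →₀ ℕ}
    {l : Fin n} (h : a l ^ β l = 0) : multiPow a β = 0 :=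
  List.prod_eq_zero ((List.mem_ofFn' _ _).2 ⟨l, h⟩)

end MultiPow

theorem Finsupp.induction_add_single_one {ι : Type*} {P : (ι →₀ ℕ) → Prop} (zero : P 0)
    (add_single : ∀ f a, P f → P (f + Finsupp.single a 1)) (f : ι →₀ ℕ) : P f := by
  induction f using Finsupp.induction with
  | zero => exact zero
  | single_add a b f _ hb hf =>
    clear hb
    induction b with
    | zero => simpa using hf
    | succ b ih => simpa only [Finsupp.single_add, add_right_comm] using add_single _ a ih

theorem Finset.sum_Iic_eq_sum_Iic_add_single {ι M : Type*} [DecidableEq ι] [AddCommMonoid M]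
    (c : ι →₀ ℕ) (i : ι) (g : (ι →₀ ℕ) → M) (hg₀ : ∀ γ, γ i = 0 → g γ = 0)
    (hgc : ∀ β, c i < β i + 1 → g (β + Finsupp.single i 1) = 0) :
    ∑ γ ∈ Iic c, g γ = ∑ β ∈ Iic c, g (β + Finsupp.single i 1) := by
  have hle : ∀ γ, g γ ≠ 0 → Finsupp.single i 1 ≤ γ := fun γ hγ =>
    Finsupp.single_le_iff.2 (Nat.one_le_iff_ne_zero.2 fun h => hγ (hg₀ γ h))
  refine Finset.sum_bij_ne_zero (fun γ _ _ => γ - Finsupp.single i 1)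
    (fun γ hγ _ => mem_Iic.2 (tsub_le_self.trans (mem_Iic.1 hγ)))
    (fun γ _ hγ γ' _ hγ' h => by
      rw [← tsub_add_cancel_of_le (hle γ hγ), ← tsub_add_cancel_of_le (hle γ' hγ'), h])
    (fun β hβ hgβ => ⟨β + Finsupp.single i 1, ?_, hgβ, add_tsub_cancel_right _ _⟩)
    (fun γ _ hγ => by rw [tsub_add_cancel_of_le (hle γ hγ)])
  refine mem_Iic.2 fun l => ?_
  rcases eq_or_ne l i with rfl | hli
  · simpa using not_lt.1 (mt (hgc β) hgβ)
  · simpa [Finsupp.single_apply, hli.symm] using mem_Iic.1 hβ l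

theorem MvPolynomial.pderiv_pderiv_comm {σ R : Type*} [CommSemiring R] (i j : σ)
    (p : MvPolynomial σ R) : pderiv i (pderiv j p) = pderiv j (pderiv i p) := by
  classical
  induction p using MvPolynomial.induction_on' with
  | monomial s a =>
    rcases eq_or_ne i j with rfl | hij
    · rfl
    · simp only [pderiv_monomial, Finsupp.tsub_apply, Finsupp.single_apply,
        hij, Ne.symm hij, if_false, Nat.sub_zero]
      rw [tsub_right_comm]
      ring_nf
  | add p q hp hq => simp [hp, hq]

section Pdiff

variable {n : ℕ} {K : Type} [CommSemiring K]

theorem pdiff_zero : pdiff (K := K) (0 : Fin n →₀ ℕ) = 1 :=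
  multiPow_zero _

theorem pdiff_add (β γ : Fin n →₀ ℕ) : pdiff (K := K) (β + γ) = pdiff β * pdiff γ :=
  multiPow_add _ (fun i j => LinearMap.ext (pderiv_pderiv_comm i j)) β γ

theorem pdiff_single (j : Fin n) :
    pdiff (K := K) (Finsupp.single j 1) = (pderiv j).toLinearMap :=
  multiPow_single _ j

theorem pdiff_add_single_apply (β : Fin n →₀ ℕ) (j : Fin n) (p : MvPolynomial (Fin n) K) :
    pdiff (β + Finsupp.single j 1) p = pdiff β (pderiv j p) := by
  rw [pdiff_add, Module.End.mul_apply, pdiff_single]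
  rfl

theorem natCast_smul_pdiff_tsub_single (γ : Fin n →₀ ℕ) (i j : Fin n)
    (p : MvPolynomial (Fin n) K) :
    (γ i : K) • pdiff (γ - Finsupp.single i 1) (pderiv j p)
      = (γ i : K) • pdiff (γ + Finsupp.single j 1 - Finsupp.single i 1) p := by
  rcases eq_or_ne (γ i) 0 with hγ | hγ
  · simp [hγ]
  · rw [← tsub_add_eq_add_tsub (Finsupp.single_le_iff.2 (Nat.one_le_iff_ne_zero.2 hγ)),
      pdiff_add_single_apply]

theorem pdiff_X_mul (i : Fin n) (γ : Fin n →₀ ℕ) (p : MvPolynomial (Fin n) K) :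
    pdiff γ (X i * p) = X i * pdiff γ p + (γ i : K) • pdiff (γ - Finsupp.single i 1) p := by
  induction γ using Finsupp.induction_add_single_one generalizing p with
  | zero => simp [pdiff_zero]
  | add_single γ j ih =>
    rw [pdiff_add_single_apply, pderiv_mul, pderiv_X, map_add, ih, add_comm, add_assoc,
      natCast_smul_pdiff_tsub_single, pdiff_add_single_apply]
    rcases eq_or_ne j i with rfl | hji
    · simp [add_smul, add_comm]
    · simp [hji]

end Pdiff

namespace Matrix

variable {ι R : Type*} [Fintype ι] [DecidableEq ι] [Semiring R]

theorem add_le_of_pow_apply_ne_zero {A : Matrix ι ι R} {w : ι → ℕ}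
    (hA : ∀ j k, A j k ≠ 0 → w k < w j) :
    ∀ m j k, (A ^ m) j k ≠ 0 → w k + m ≤ w j
  | 0, j, k, h => by
    obtain rfl : j = k := by
      by_contra hjk
      exact h (by rw [pow_zero, one_apply_ne hjk])
    simp
  | m + 1, j, k, h => by
    rw [pow_succ', mul_apply] at h
    obtain ⟨l, -, hl⟩ := Finset.exists_ne_zero_of_sum_ne_zero h
    have hjl := hA j l (left_ne_zero_of_mul hl)
    have hlk := add_le_of_pow_apply_ne_zero hA m l k (right_ne_zero_of_mul hl)
    omega

theorem pow_card_eq_zero_of_apply_ne_zero_lt {α : Type*} [Preorder α] {A : Matrix ι ι R}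
    {w : ι → α} (hA : ∀ j k, A j k ≠ 0 → w k < w j) : A ^ Fintype.card ι = 0 := by
  classical
  let rank : ι → ℕ := fun l => (Finset.univ.filter fun l' => w l' < w l).card
  have rank_lt_rank : ∀ j k, w k < w j → rank k < rank j := fun j k hkj =>
    Finset.card_lt_card <| (Finset.ssubset_iff_of_subset fun l => by
      simpa using fun hl => hl.trans hkj).2 ⟨k, by simpa using hkj, by simp⟩
  have rank_lt_card : ∀ j, rank j < Fintype.card ι := fun j =>
    Finset.card_lt_card (Finset.filter_ssubset.2 ⟨j, Finset.mem_univ j, lt_irrefl _⟩)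
  ext j k
  by_contra h
  have := add_le_of_pow_apply_ne_zero (fun j k h => rank_lt_rank j k (hA j k h)) _ j k h
  have := rank_lt_card j
  omega

end Matrix

theorem Matrix.multiPow_add_single_sub_apply_mem {ι R : Type*} [Fintype ι] [DecidableEq ι]
    [CommRing R] {n : ℕ} {I : Ideal R} (A : Fin n → Matrix ι ι R)
    (hA : ∀ l l' j k, (A l * A l' - A l' * A l) j k ∈ I) (β : Fin n →₀ ℕ) (i : Fin n)
    (j k : ι) : (multiPow A (β + Finsupp.single i 1) - A i * multiPow A β) j k ∈ I := by
  let Q := (Ideal.Quotient.mk I).mapMatrix (m := ι)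
  have hQ : ∀ B, Q B = 0 ↔ ∀ j k, B j k ∈ I := fun B => by
    simp [Q, ← Matrix.ext_iff, Ideal.Quotient.eq_zero_iff_mem]
  have hcomm : ∀ l l', Commute (Q (A l)) (Q (A l')) := fun l l' =>
    sub_eq_zero.1 <| by rw [← map_mul, ← map_mul, ← map_sub, hQ]; exact hA l l'
  refine (hQ _).1 ?_ j k
  rw [map_sub, map_mul, map_multiPow, map_multiPow, add_comm, multiPow_add _ hcomm,
    multiPow_single, sub_self]

theorem Matrix.mulVec_apply_mem {ι R : Type*} [Fintype ι] [CommRing R] {I : Ideal R}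
    {A : Matrix ι ι R} (hA : ∀ j k, A j k ∈ I) (v : ι → R) (j : ι) : (A *ᵥ v) j ∈ I :=
  Ideal.sum_mem _ fun k _ => I.mul_mem_right _ (hA j k)

theorem mfact_add_single {n : ℕ} (β : Fin n →₀ ℕ) (i : Fin n) :
    mfact (β + Finsupp.single i 1) = mfact β * (β i + 1) := by
  have h : ∀ l, ((β + Finsupp.single i 1 : Fin n →₀ ℕ) l).factorial
      = (β l).factorial * if i = l then β i + 1 else 1 := by
    intro l
    rcases eq_or_ne i l with rfl | hil
    · simp [Nat.factorial_succ, mul_comm]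
    · simp [hil]
  simp only [mfact, h, Finset.prod_mul_distrib, Finset.prod_ite_eq, Finset.mem_univ, if_true]

section Parametric

variable {n δ : ℕ} (α : Fin δ → (Fin n →₀ ℕ)) (K : Type) [CommSemiring K]

theorem mdeg_lt_of_pmmT_apply_ne_zero (i : Fin n) (j k : Fin δ) (h : pmmT α K i j k ≠ 0) :
    mdeg (α k) < mdeg (α j) := by
  by_contra hkj
  have hj : α j ≠ α k + Finsupp.single i 1 := fun he => hkj <| by
    simp [he, mdeg, Finsupp.sum_add_index']
  apply h
  by_cases hE : ∃ l, α l = α k + Finsupp.single i 1 <;> simp [pmmT, pmm, hj, hE, hkj]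

theorem pmmT_pow_eq_zero (i : Fin n) : pmmT α K i ^ δ = 0 := by
  simpa using Matrix.pow_card_eq_zero_of_apply_ne_zero_lt (mdeg_lt_of_pmmT_apply_ne_zero α K i)

theorem pmmPowT_eq_zero {γ : Fin n →₀ ℕ} {l : Fin n} (h : δ ≤ γ l) : pmmPowT α K γ = 0 :=
  multiPow_eq_zero _ (pow_eq_zero_of_le h (pmmT_pow_eq_zero α K l))

end Parametric

section TaylorSum

variable {n : ℕ} {σ ι : Type*} {K : Type} [Field K]

def taylorSum (d : ℕ) (v : (Fin n →₀ ℕ) → ι → MvPolynomial (Fin n ⊕ σ) K) :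
    MvPolynomial (Fin n) K →ₗ[K] ι → MvPolynomial (Fin n ⊕ σ) K :=
  ∑ γ ∈ Finset.Iic (Finsupp.equivFunOnFinite.symm fun _ : Fin n => d),
    (mfact γ : K)⁻¹ • ((rename (Sum.inl (β := σ))).toLinearMap ∘ₗ pdiff γ).smulRight (v γ)

theorem taylorSum_apply (d : ℕ) (v : (Fin n →₀ ℕ) → ι → MvPolynomial (Fin n ⊕ σ) K)
    (p : MvPolynomial (Fin n) K) :
    taylorSum d v p = ∑ γ ∈ Finset.Iic (Finsupp.equivFunOnFinite.symm fun _ : Fin n => d),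
      (mfact γ : K)⁻¹ • (rename (Sum.inl (β := σ)) (pdiff γ p) • v γ) := by
  simp [taylorSum]

theorem taylorSum_add (d : ℕ) (v w : (Fin n →₀ ℕ) → ι → MvPolynomial (Fin n ⊕ σ) K) :
    taylorSum d (v + w) = taylorSum d v + taylorSum d w := by
  refine LinearMap.ext fun p => ?_
  simp only [LinearMap.add_apply, taylorSum_apply, Pi.add_apply, smul_add,
    Finset.sum_add_distrib]

theorem taylorSum_mulVec [Fintype ι] (d : ℕ)
    (v : (Fin n →₀ ℕ) → ι → MvPolynomial (Fin n ⊕ σ) K)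
    (A : Matrix ι ι (MvPolynomial (Fin n ⊕ σ) K)) (p : MvPolynomial (Fin n) K) :
    taylorSum d (fun γ => A *ᵥ v γ) p = A *ᵥ taylorSum d v p := by
  simp [taylorSum_apply, Matrix.mulVec_sum, Matrix.mulVec_smul]

theorem taylorSum_apply_mem {I : Ideal (MvPolynomial (Fin n ⊕ σ) K)} (d : ℕ)
    {v : (Fin n →₀ ℕ) → ι → MvPolynomial (Fin n ⊕ σ) K} (hv : ∀ γ j, v γ j ∈ I)
    (p : MvPolynomial (Fin n) K) (j : ι) : taylorSum d v p j ∈ I := by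
  rw [taylorSum_apply, Finset.sum_apply]
  refine I.sum_mem fun γ _ => ?_
  simp only [Pi.smul_apply, smul_eq_mul]
  exact Submodule.smul_of_tower_mem _ _ (I.mul_mem_left _ (hv γ j))

theorem taylorSum_X_mul [CharZero K] (d : ℕ) (i : Fin n)
    {v : (Fin n →₀ ℕ) → ι → MvPolynomial (Fin n ⊕ σ) K} (hv : ∀ γ, d < γ i → v γ = 0)
    (p : MvPolynomial (Fin n) K) :
    taylorSum d v (X i * p) =
      (X (Sum.inl i) : MvPolynomial (Fin n ⊕ σ) K) • taylorSum d v p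
        + taylorSum d (fun β => v (β + Finsupp.single i 1)) p := by
  let g : (Fin n →₀ ℕ) → ι → MvPolynomial (Fin n ⊕ σ) K := fun γ =>
    ((γ i : K) * (mfact γ : K)⁻¹) •
      (rename (Sum.inl (β := σ)) (pdiff (γ - Finsupp.single i 1) p) • v γ)
  have hshift : ∑ γ ∈ Finset.Iic (Finsupp.equivFunOnFinite.symm fun _ : Fin n => d), g γ =
      taylorSum d (fun β => v (β + Finsupp.single i 1)) p := by
    rw [Finset.sum_Iic_eq_sum_Iic_add_single _ i g (fun γ hγ => by simp [g, hγ])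
      (fun β hβ => by simp only [g, hv (β + Finsupp.single i 1) (by simpa using hβ), smul_zero]),
      taylorSum_apply]
    refine Finset.sum_congr rfl fun β _ => ?_
    simp only [g, add_tsub_cancel_right, mfact_add_single]
    congr 1
    simp only [Finsupp.coe_add, Pi.add_apply, Finsupp.single_eq_same]
    push_cast
    field_simp
  rw [← hshift, taylorSum_apply, taylorSum_apply, Finset.smul_sum, ← Finset.sum_add_distrib]
  refine Finset.sum_congr rfl fun γ _ => ?_
  simp only [g, pdiff_X_mul, map_add, map_mul, rename_X, map_smul, add_smul, smul_assoc]
  module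

end TaylorSum

theorem pnf_eq_taylorSum {n δ : ℕ} [NeZero δ] (α : Fin δ → (Fin n →₀ ℕ)) (K : Type) [Field K]
    (p : MvPolynomial (Fin n) K) :
    pnf α K p = taylorSum δ (fun γ => pmmPowT α K γ *ᵥ Pi.single 0 1) p := by
  ext j
  simp [pnf, taylorSum_apply, Finset.sum_apply]

theorem pnf_product_rule_general {n δ : ℕ} [NeZero δ] {K : Type} [Field K] [CharZero K]
    (α : Fin δ → (Fin n →₀ ℕ)) :
    ∀ i : Fin n,
      ∃ O : MvPolynomial (Fin n) K →ₗ[K]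
          (Fin δ → MvPolynomial ((Fin n) ⊕ (Subtype (UsedPair α))) K),
        (∀ p j, O p j ∈ commIdeal α K) ∧
        (∀ p, pnf α K (X i * p) =
          (fun j => X (Sum.inl i) * pnf α K p j)
            + (pmmT α K i).mulVec (pnf α K p) + O p) := by
  intro i
  let e₀ : Fin δ → MvPolynomial (Fin n ⊕ Subtype (UsedPair α)) K := Pi.single 0 1
  let C : (Fin n →₀ ℕ) → Matrix (Fin δ) (Fin δ) _ := fun β =>
    pmmPowT α K (β + Finsupp.single i 1) - pmmT α K i * pmmPowT α K β
  refine ⟨taylorSum δ fun β => C β *ᵥ e₀, fun p j => ?_, fun p => ?_⟩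
  · refine taylorSum_apply_mem δ (fun β j => Matrix.mulVec_apply_mem (fun j k => ?_) _ j) p j
    exact Matrix.multiPow_add_single_sub_apply_mem (I := commIdeal α K) _
      (fun l l' j k => Ideal.subset_span ⟨l, l', j, k, rfl⟩) β i j k
  · have hsplit : (fun β => pmmPowT α K (β + Finsupp.single i 1) *ᵥ e₀) =
        (fun β => pmmT α K i *ᵥ (pmmPowT α K β *ᵥ e₀)) + fun β => C β *ᵥ e₀ := by
      funext β
      simp [C, Matrix.sub_mulVec, Matrix.mulVec_mulVec]
    rw [pnf_eq_taylorSum, pnf_eq_taylorSum,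
      taylorSum_X_mul δ i (fun γ hγ => by rw [pmmPowT_eq_zero α K hγ.le, Matrix.zero_mulVec]),
      hsplit, taylorSum_add, LinearMap.add_apply, taylorSum_mulVec, add_assoc]
    rfl

/-- product rule for the parametric normal form.  For every `i`,
`N_{z,μ}(xᵢ·p) = zᵢ·N_{z,μ}(p) + Mᵢ(μ)·N_{z,μ}(p) + O_{i,μ}(p)` where
`O_{i,μ}` is a `K`-linear map whose values have all entries in the
commutator ideal `C`. -/
theorem pnf_product_rule {n δ : ℕ} [NeZero δ] {K : Type} [Field K] [CharZero K]
    (α : Fin δ → (Fin n →₀ ℕ))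
    (hα0 : α 0 = 0)
    (hconn : ∀ j, α j ≠ 0 → ∃ (k : Fin δ) (i : Fin n),
      α j = α k + Finsupp.single i 1) :
    ∀ i : Fin n,
      ∃ O : MvPolynomial (Fin n) K →ₗ[K]
          (Fin δ → MvPolynomial ((Fin n) ⊕ (Subtype (UsedPair α))) K),
        (∀ p j, O p j ∈ commIdeal α K) ∧
        (∀ p, pnf α K (X i * p) =
          (fun j => X (Sum.inl i) * pnf α K p j)
            + (pmmT α K i).mulVec (pnf α K p) + O p) :=
  pnf_product_rule_general α

end
end

section
/- For any n ≥ 2, the system x₁³ + x₁² − x₂², x₂³ + x₂² − x₃, …, x_{n−1}³ + x_{n−1}² − xₙ, xₙ² in n variables has the origin as an isolated root of multiplicity 2ⁿ, with primal basis for the local quotient ring given by the monomials {x₁^a x₂^b : 0 ≤ a < 2^{n−1}, 0 ≤ b < 2}, and the corank of the Jacobian at the origin equals 2 (breadth two). -/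
/-! Write `x₀, …, x_{n-1}` for the variables. The equations read `x₁² = x₀²(1 + x₀)`,
`x_{k+1} = x_k²(1 + x_k)` for `0 < k < n - 1`, and `x_{n-1}² = 0`. Squaring down the chain gives
`x_{n-1}² = x₀^(2^(n-1)) · u` with `u(0) = 1`, so localizing at the origin adds `x₀^(2^(n-1))` to
the ideal. Every `x_k` is then nilpotent in the quotient, which is spanned by the `x₀^a x₁^b` with
`a < 2^(n-1)`, `b < 2`. These are linearly independent, since they map to a basis of
`ℂ[t, r] ⧸ (t^(2^(n-1)), r² - t²(1 + t))`. Because a power of every variable lies in the ideal,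
Macaulay duality identifies the dual space with the dual of this `2ⁿ`-dimensional quotient. At the
origin only the `∂x_{k+1}` entries of the Jacobian survive, so its kernel is spanned by the first
two coordinates. -/

open MvPolynomial

noncomputable section

namespace BreadthTwo

open Finsupp

variable {n : ℕ}

lemma mfact_add_single_one (m : Fin n →₀ ℕ) (j : Fin n) :
    mfact (m + single j 1) = (m j + 1) * mfact m := by
  have hfac : ∀ i, Nat.factorial ((m + single j 1 : Fin n →₀ ℕ) i) =
      (if i = j then m j + 1 else 1) * Nat.factorial (m i) := by
    intro i
    by_cases h : i = j
    · subst h; simp [Nat.factorial_succ]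
    · simp [h]
  simp only [mfact, hfac, Finset.prod_mul_distrib, Finset.prod_ite_eq', Finset.mem_univ, if_true]

lemma mfact_mul_coeff_list_prod_pderiv (l : List (Fin n)) (m : Fin n →₀ ℕ)
    (p : MvPolynomial (Fin n) ℂ) :
    (mfact m : ℂ) * coeff m ((l.map fun i => (pderiv i).toLinearMap).prod p) =
      mfact (m + Multiset.toFinsupp l) * coeff (m + Multiset.toFinsupp l) p := by
  induction l generalizing m with
  | nil => simp
  | cons j l ih =>
    have hT : m + Multiset.toFinsupp ↑(j :: l) = m + single j 1 + Multiset.toFinsupp l := by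
      rw [← Multiset.cons_coe, ← Multiset.singleton_add, map_add,
        Multiset.toFinsupp_singleton, add_assoc]
    rw [List.map_cons, List.prod_cons, Module.End.mul_apply, Derivation.coeFn_coe,
      coeff_pderiv, hT, ← ih, mfact_add_single_one]
    push_cast
    ring

lemma pdiff_eq_list_prod (β : Fin n →₀ ℕ) :
    (pdiff β : Module.End ℂ (MvPolynomial (Fin n) ℂ)) =
      (((List.ofFn fun i => List.replicate (β i) i).flatten).map
        fun i => (pderiv i).toLinearMap).prod := by
  rw [pdiff, List.map_flatten, List.map_ofFn, List.prod_flatten, List.map_ofFn]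
  congr 1
  ext1 i
  simp [List.map_replicate, List.prod_replicate]

lemma toFinsupp_flatten_replicate (β : Fin n →₀ ℕ) :
    Multiset.toFinsupp ↑(List.ofFn fun i => List.replicate (β i) i).flatten = β := by
  ext j
  simp [Multiset.toFinsupp_apply, List.count_flatten, List.sum_ofFn, List.count_replicate]

lemma eval_zero_pdiff (β : Fin n →₀ ℕ) (p : MvPolynomial (Fin n) ℂ) :
    eval 0 (pdiff β p) = mfact β * coeff β p := by
  have h := mfact_mul_coeff_list_prod_pderiv
    (List.ofFn fun i => List.replicate (β i) i).flatten 0 p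
  rw [toFinsupp_flatten_replicate, zero_add, ← pdiff_eq_list_prod] at h
  simpa [mfact, eval_zero, constantCoeff_eq] using h

lemma dapply_zero (Λ : (Fin n →₀ ℕ) →₀ ℂ) (p : MvPolynomial (Fin n) ℂ) :
    dapply 0 Λ p = Λ.sum fun β c => c * (mfact β * coeff β p) := by
  simp only [dapply, eval_zero_pdiff]

lemma dapply_zero_monomial (Λ : (Fin n →₀ ℕ) →₀ ℂ) (α : Fin n →₀ ℕ) (c : ℂ) :
    dapply 0 Λ (monomial α c) = Λ α * (mfact α * c) := by
  classical
  rw [dapply_zero, Finsupp.sum, Finset.sum_eq_single α]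
  · simp
  · intro β _ hβ
    simp [coeff_monomial, Ne.symm hβ]
  · intro hα
    simp [Finsupp.notMem_support_iff.mp hα]

def dapplyPoly (ξ : Fin n → ℂ) (Λ : (Fin n →₀ ℕ) →₀ ℂ) : MvPolynomial (Fin n) ℂ →ₗ[ℂ] ℂ where
  toFun := dapply ξ Λ
  map_add' p q := by
    simp only [dapply, map_add, mul_add, Finsupp.sum_add]
  map_smul' c p := by
    simp only [dapply, map_smul, smul_eval, smul_eq_mul, RingHom.id_apply, Finsupp.mul_sum]
    exact Finsupp.sum_congr fun β d => by ring

lemma dapply_add (ξ : Fin n → ℂ) (Λ : (Fin n →₀ ℕ) →₀ ℂ) (p q : MvPolynomial (Fin n) ℂ) :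
    dapply ξ Λ (p + q) = dapply ξ Λ p + dapply ξ Λ q :=
  (dapplyPoly ξ Λ).map_add p q

lemma mem_idealOfVars_of_constantCoeff_eq_zero {p : MvPolynomial (Fin n) ℂ}
    (hp : constantCoeff p = 0) : p ∈ idealOfVars (Fin n) ℂ := by
  rw [← pow_one (idealOfVars (Fin n) ℂ), mem_pow_idealOfVars_iff']
  intro α hα
  obtain rfl : α = 0 := by rwa [Nat.lt_one_iff, Finsupp.degree_eq_zero_iff] at hα
  rwa [← constantCoeff_eq]

lemma dapply_zero_eq_zero_of_mem_pow {Λ : (Fin n →₀ ℕ) →₀ ℂ} {p : MvPolynomial (Fin n) ℂ}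
    (hp : p ∈ idealOfVars (Fin n) ℂ ^ (ordD Λ + 1)) : dapply 0 Λ p = 0 := by
  rw [dapply_zero]
  refine Finset.sum_eq_zero fun β hβ => ?_
  dsimp only
  rw [(mem_pow_idealOfVars_iff' _ p).mp hp β (Nat.lt_succ_of_le (Finset.le_sup hβ)),
    mul_zero, mul_zero]

lemma dualSpace_antitone {I J : Ideal (MvPolynomial (Fin n) ℂ)} (h : I ≤ J) (ξ : Fin n → ℂ) :
    dualSpace J ξ ≤ dualSpace I ξ := fun _ hΛ =>
  mem_dualSpace.mpr fun p hp => mem_dualSpace.mp hΛ p (h hp)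

/-- Write `u = 1 - e`. Then `w g = σ w (u g) + e^(d+1) w g` with `σ = ∑_{i ≤ d} e^i`, and since
`e(0) = 0` the last term lies in the `(d+1)`-st power of the maximal ideal, which operators of
order `d` do not see. -/
lemma dualSpace_sup_span_singleton {J : Ideal (MvPolynomial (Fin n) ℂ)}
    {g u : MvPolynomial (Fin n) ℂ} (hu : constantCoeff u = 1) (hug : u * g ∈ J) :
    dualSpace (J ⊔ Ideal.span {g}) 0 = dualSpace J 0 := by
  refine le_antisymm (dualSpace_antitone le_sup_left 0) fun Λ hΛ => mem_dualSpace.mpr ?_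
  intro p hp
  obtain ⟨q, hq, r, hr, rfl⟩ := Submodule.mem_sup.mp hp
  obtain ⟨w, rfl⟩ := Ideal.mem_span_singleton'.mp hr
  obtain ⟨e, rfl⟩ : ∃ e, u = 1 - e := ⟨1 - u, by ring⟩
  have he : e ∈ idealOfVars (Fin n) ℂ :=
    mem_idealOfVars_of_constantCoeff_eq_zero (by simpa using hu)
  have hsplit : w * g = ((∑ i ∈ Finset.range (ordD Λ + 1), e ^ i) * w) * ((1 - e) * g) +
      e ^ (ordD Λ + 1) * (w * g) := by
    linear_combination -(w * g) * mul_neg_geom_sum e (ordD Λ + 1)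
  rw [dapply_add, mem_dualSpace.mp hΛ q hq, zero_add, hsplit, dapply_add,
    mem_dualSpace.mp hΛ _ (J.mul_mem_left _ hug), zero_add]
  exact dapply_zero_eq_zero_of_mem_pow (Ideal.mul_mem_right _ _ (Ideal.pow_mem_pow he _))

lemma monomial_mem_of_X_pow_mem {J : Ideal (MvPolynomial (Fin n) ℂ)} {i : Fin n} {K : ℕ}
    (hK : X i ^ K ∈ J) {α : Fin n →₀ ℕ} (hα : K ≤ α i) (c : ℂ) : monomial α c ∈ J := by
  have hle : single i K ≤ α := Finsupp.single_le_iff.mpr hα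
  have : monomial α c = X i ^ K * monomial (α - single i K) c := by
    rw [X_pow_eq_monomial, monomial_mul, one_mul, add_tsub_cancel_of_le hle]
  rw [this]
  exact J.mul_mem_right _ hK

def dualSpaceToDualAnnihilator (J : Ideal (MvPolynomial (Fin n) ℂ)) :
    dualSpace J 0 →ₗ[ℂ] (J.restrictScalars ℂ).dualAnnihilator where
  toFun Λ := ⟨dapplyPoly 0 Λ, (Submodule.mem_dualAnnihilator _).mpr fun p hp =>
    mem_dualSpace.mp Λ.2 p hp⟩
  map_add' Λ Λ' := Subtype.ext (LinearMap.ext fun p => (dapplyL 0 p).map_add Λ Λ')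
  map_smul' c Λ := Subtype.ext (LinearMap.ext fun p => (dapplyL 0 p).map_smul c Λ)

lemma dualSpaceToDualAnnihilator_injective (J : Ideal (MvPolynomial (Fin n) ℂ)) :
    Function.Injective (dualSpaceToDualAnnihilator J) := by
  refine (injective_iff_map_eq_zero _).mpr fun Λ hΛ => Subtype.ext (Finsupp.ext fun α => ?_)
  have h : dapply 0 Λ.1 (monomial α 1) = 0 := congrArg (fun φ => φ.1 (monomial α 1)) hΛ
  rw [dapply_zero_monomial, mul_one] at h
  exact (mul_eq_zero.mp h).resolve_right (by simp [mfact, Finset.prod_ne_zero_iff,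
    Nat.factorial_ne_zero])

/-- The preimage of `φ` is `∑_α φ(x^α)/α! ∂^α` over the exponents `α ≤ (K, …, K)`; all other
monomials lie in `J`. -/
lemma dualSpaceToDualAnnihilator_surjective {J : Ideal (MvPolynomial (Fin n) ℂ)} {K : ℕ}
    (hK : ∀ i, X i ^ K ∈ J) : Function.Surjective (dualSpaceToDualAnnihilator J) := by
  classical
  rintro ⟨φ, hφ⟩
  rw [Submodule.mem_dualAnnihilator] at hφ
  let box := Finset.Iic (equivFunOnFinite.symm fun _ : Fin n => K)
  let Λ : (Fin n →₀ ℕ) →₀ ℂ := Finsupp.onFinset box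
    (fun α => if α ∈ box then (mfact α : ℂ)⁻¹ * φ (monomial α 1) else 0)
    (fun α h => by by_contra hα; simp [hα] at h)
  have hΛ : ∀ p, dapply 0 Λ p = φ p := by
    intro p
    induction p using MvPolynomial.induction_on' with
    | monomial α c =>
      rw [dapply_zero_monomial, Finsupp.onFinset_apply]
      by_cases hα : α ∈ box
      · have hfact : (mfact α : ℂ) ≠ 0 := by
          simp [mfact, Finset.prod_ne_zero_iff, Nat.factorial_ne_zero]
        have hsmul : monomial α c = c • monomial α 1 := by rw [smul_monomial, smul_eq_mul, mul_one]
        rw [if_pos hα, hsmul, map_smul, smul_eq_mul]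
        field_simp
      · obtain ⟨i, hi⟩ : ∃ i, K < α i := by
          simpa [box, Finsupp.le_def] using hα
        rw [if_neg hα, zero_mul, hφ _ (monomial_mem_of_X_pow_mem (hK i) hi.le c)]
    | add p q hp hq => rw [dapply_add, hp, hq, map_add]
  exact ⟨⟨Λ, mem_dualSpace.mpr fun p hp => (hΛ p).trans (hφ p hp)⟩,
    Subtype.ext (LinearMap.ext hΛ)⟩

lemma finrank_dualSpace_zero {J : Ideal (MvPolynomial (Fin n) ℂ)} {K : ℕ}
    (hK : ∀ i, X i ^ K ∈ J) :
    Module.finrank ℂ (dualSpace J 0) = Module.finrank ℂ (MvPolynomial (Fin n) ℂ ⧸ J) := by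
  rw [LinearEquiv.finrank_eq (LinearEquiv.ofBijective _
      ⟨dualSpaceToDualAnnihilator_injective J, dualSpaceToDualAnnihilator_surjective hK⟩),
    ← LinearEquiv.finrank_eq (Submodule.dualQuotEquivDualAnnihilator _),
    Subspace.dual_finrank_eq,
    LinearEquiv.finrank_eq (Submodule.Quotient.restrictScalarsEquiv ℂ J)]

section NilpotentVariables

variable {J : Ideal (MvPolynomial (Fin n) ℂ)}
  (hJ : ∀ i, IsNilpotent (Ideal.Quotient.mk J (X i)))
include hJ

lemma isUnit_mk_of_constantCoeff_ne_zero {s : MvPolynomial (Fin n) ℂ}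
    (hs : constantCoeff s ≠ 0) : IsUnit (Ideal.Quotient.mk J s) := by
  have hvars : (idealOfVars (Fin n) ℂ).map (Ideal.Quotient.mk J) ≤ nilradical _ := by
    rw [Ideal.map_span, Ideal.span_le]
    rintro _ ⟨_, ⟨i, rfl⟩, rfl⟩
    exact hJ i
  have hnil : IsNilpotent (Ideal.Quotient.mk J (s - C (constantCoeff s))) :=
    hvars (Ideal.mem_map_of_mem _ (mem_idealOfVars_of_constantCoeff_eq_zero (by simp)))
  have hunit : IsUnit (Ideal.Quotient.mk J (C (constantCoeff s))) :=
    ((isUnit_iff_ne_zero.mpr hs).map C).map _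
  simpa using hnil.isUnit_add_left_of_commute hunit (Commute.all _ _)

lemma exists_X_pow_mem : ∃ K, ∀ i, X i ^ K ∈ J := by
  choose k hk using hJ
  refine ⟨∑ i, k i, fun i => ?_⟩
  rw [← Ideal.Quotient.eq_zero_iff_mem, map_pow]
  exact pow_eq_zero_of_le (Finset.single_le_sum (by simp) (Finset.mem_univ i)) (hk i)

end NilpotentVariables

variable (n) in
def var (k : ℕ) : MvPolynomial (Fin n) ℂ := if h : k < n then X ⟨k, h⟩ else 0

lemma var_of_lt {k : ℕ} (h : k < n) : var n k = X ⟨k, h⟩ := dif_pos h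

@[simp]
lemma constantCoeff_var (k : ℕ) : constantCoeff (var n k) = 0 := by
  unfold var
  split_ifs <;> simp

def system (n : ℕ) (hn : 2 ≤ n) : Fin n → MvPolynomial (Fin n) ℂ := fun i =>
  if (i : ℕ) = 0 then
    X (⟨0, Nat.zero_lt_of_lt hn⟩ : Fin n) ^ 3 + X (⟨0, Nat.zero_lt_of_lt hn⟩ : Fin n) ^ 2
      - X (⟨1, hn⟩ : Fin n) ^ 2
  else if hl : (i : ℕ) = n - 1 then X i ^ 2
  else X i ^ 3 + X i ^ 2
    - X (⟨(i : ℕ) + 1, Nat.lt_of_le_of_ne i.isLt fun h => hl (Nat.eq_sub_of_add_eq h)⟩ : Fin n)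

section System

variable (hn : 2 ≤ n)

lemma system_zero :
    system n hn ⟨0, Nat.zero_lt_of_lt hn⟩ = var n 0 ^ 3 + var n 0 ^ 2 - var n 1 ^ 2 := by
  simp [system, var_of_lt (show 0 < n by omega), var_of_lt (show 1 < n by omega)]

lemma system_of_pos {k : ℕ} (h0 : 0 < k) (hk : k + 1 < n) :
    system n hn ⟨k, Nat.lt_of_succ_lt hk⟩ = var n k ^ 3 + var n k ^ 2 - var n (k + 1) := by
  simp [system, var_of_lt hk, var_of_lt (show k < n by omega), h0.ne', show k ≠ n - 1 by omega]

lemma system_last : system n hn ⟨n - 1, Nat.sub_one_lt_of_lt hn⟩ = var n (n - 1) ^ 2 := by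
  simp [system, var_of_lt (show n - 1 < n by omega), show n - 1 ≠ 0 by omega]

end System

/-- The relations imposed by all equations of `system` but the last one, `x_{n-1}² = 0`. -/
structure IsChain {A : Type*} [CommRing A] (n : ℕ) (y : ℕ → A) : Prop where
  sq_one : y 1 ^ 2 = y 0 ^ 2 * (1 + y 0)
  succ : ∀ k, 0 < k → k + 1 < n → y (k + 1) = y k ^ 2 * (1 + y k)

lemma map_system_eq_zero_iff (hn : 2 ≤ n) {A : Type*} [CommRing A]
    (f : MvPolynomial (Fin n) ℂ →+* A) :
    (∀ m, f (system n hn m) = 0) ↔ IsChain n (f ∘ var n) ∧ f (var n (n - 1)) ^ 2 = 0 := by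
  constructor
  · intro h
    refine ⟨⟨?_, fun k h0 hk => ?_⟩, ?_⟩
    · have := h ⟨0, by omega⟩
      rw [system_zero, map_sub, map_add, map_pow, map_pow, map_pow] at this
      simp only [Function.comp_apply]
      linear_combination -this
    · have := h ⟨k, by omega⟩
      rw [system_of_pos hn h0 hk, map_sub, map_add, map_pow, map_pow] at this
      simp only [Function.comp_apply]
      linear_combination -this
    · simpa [system_last] using h ⟨n - 1, by omega⟩
  · rintro ⟨⟨hsq, hsucc⟩, hlast⟩ ⟨m, hm⟩
    simp only [Function.comp_apply] at hsq hsucc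
    rcases Nat.eq_zero_or_pos m with rfl | h0
    · rw [system_zero, map_sub, map_add, map_pow, map_pow, map_pow]
      linear_combination -hsq
    · rcases (show m + 1 < n ∨ m = n - 1 by omega) with hmid | rfl
      · rw [system_of_pos hn h0 hmid, map_sub, map_add, map_pow, map_pow]
        linear_combination -hsucc m h0 hmid
      · rwa [system_last, map_pow]

lemma exists_sq_eq_pow_mul {A : Type*} [CommRing A] {f : MvPolynomial (Fin n) ℂ →+* A}
    (hc : IsChain n (f ∘ var n)) {k : ℕ} (h0 : 0 < k) (hk : k < n) :
    ∃ u, constantCoeff u = 1 ∧ f (var n k) ^ 2 = f (var n 0) ^ 2 ^ k * f u := by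
  induction k, h0 using Nat.le_induction with
  | base => exact ⟨1 + var n 0, by simp, by simpa [map_add] using hc.sq_one⟩
  | succ k h0 ih =>
    obtain ⟨u, hu, hsq⟩ := ih (by omega)
    refine ⟨u ^ 2 * (1 + var n k) ^ 2, by simp [hu], ?_⟩
    have hstep : f (var n (k + 1)) = f (var n k) ^ 2 * (1 + f (var n k)) := hc.succ k h0 hk
    rw [hstep, pow_succ 2 k, pow_mul, map_mul, map_pow, map_pow, map_add, map_one]
    linear_combination (f (var n k) ^ 2 + f (var n 0) ^ 2 ^ k * f u) *
      (1 + f (var n k)) ^ 2 * hsq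

lemma eq_zero_of_sq_mul_one_add_eq_zero {a : ℂ} (ha : ‖a‖ < 1) (h : a ^ 2 * (1 + a) = 0) :
    a = 0 := by
  have h1 : 1 + a ≠ 0 := fun h1 => by
    rw [show a = -1 by linear_combination h1] at ha
    norm_num at ha
  exact pow_eq_zero_iff two_ne_zero |>.mp ((mul_eq_zero.mp h).resolve_right h1)

lemma IsChain.eq_zero {y : ℕ → ℂ} (hc : IsChain n y) (hlast : y (n - 1) ^ 2 = 0)
    (hsmall : ∀ k < n, ‖y k‖ < 1) {k : ℕ} (hk : k < n) : y k = 0 := by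
  refine Nat.decreasingInduction (motive := fun k _ => k < n → y k = 0) (fun k _ ih hk => ?_)
    (fun _ => pow_eq_zero_iff two_ne_zero |>.mp hlast) (Nat.le_sub_one_of_lt hk) hk
  refine eq_zero_of_sq_mul_one_add_eq_zero (hsmall k hk) ?_
  have hy : y (k + 1) = 0 := ih (by omega)
  rcases Nat.eq_zero_or_pos k with rfl | h0
  · rw [← hc.sq_one, hy, zero_pow two_ne_zero]
  · rw [← hc.succ k h0 (by omega), hy]

lemma exists_nhds_eq_zero_of_eval_system (hn : 2 ≤ n) :
    ∃ U ∈ nhds (0 : Fin n → ℂ), ∀ x ∈ U, (∀ m, eval x (system n hn m) = 0) → x = 0 := by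
  refine ⟨Metric.ball 0 1, Metric.ball_mem_nhds _ one_pos, fun x hx hroot => ?_⟩
  obtain ⟨hc, hlast⟩ := (map_system_eq_zero_iff hn (eval x)).mp hroot
  have hsmall : ∀ k < n, ‖eval x (var n k)‖ < 1 := fun k hk => by
    rw [var_of_lt hk, eval_X]
    simpa using (dist_pi_lt_iff one_pos).mp (Metric.mem_ball.mp hx) ⟨k, hk⟩
  funext ⟨k, hk⟩
  simpa [var_of_lt hk] using hc.eq_zero hlast hsmall hk

lemma eval_zero_system (hn : 2 ≤ n) (m : Fin n) : eval 0 (system n hn m) = 0 :=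
  (map_system_eq_zero_iff hn (eval 0)).mpr
    ⟨⟨by simp [eval_zero], fun _ _ _ => by simp [eval_zero]⟩, by simp [eval_zero]⟩ m

def primaryComponent (n : ℕ) (hn : 2 ≤ n) : Ideal (MvPolynomial (Fin n) ℂ) :=
  Ideal.span (Set.range (system n hn)) ⊔ Ideal.span {var n 0 ^ 2 ^ (n - 1)}

section Ideals

variable (hn : 2 ≤ n)

lemma isChain_mk {J : Ideal (MvPolynomial (Fin n) ℂ)}
    (hJ : Ideal.span (Set.range (system n hn)) ≤ J) :
    IsChain n (Ideal.Quotient.mk J ∘ var n) ∧ Ideal.Quotient.mk J (var n (n - 1)) ^ 2 = 0 :=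
  (map_system_eq_zero_iff hn _).mp fun m =>
    Ideal.Quotient.eq_zero_iff_mem.mpr (hJ (Ideal.subset_span ⟨m, rfl⟩))

lemma exists_mul_pow_mem_span_system :
    ∃ u, constantCoeff u = 1 ∧
      u * var n 0 ^ 2 ^ (n - 1) ∈ Ideal.span (Set.range (system n hn)) := by
  obtain ⟨hc, hlast⟩ := isChain_mk hn le_rfl
  obtain ⟨u, hu, hsq⟩ := exists_sq_eq_pow_mul hc (k := n - 1) (by omega) (by omega)
  refine ⟨u, hu, Ideal.Quotient.eq_zero_iff_mem.mp ?_⟩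
  rw [map_mul, map_pow, mul_comm, ← hsq, hlast]

lemma isNilpotent_mk_primaryComponent_X (i : Fin n) :
    IsNilpotent (Ideal.Quotient.mk (primaryComponent n hn) (X i)) := by
  obtain ⟨hc, -⟩ := isChain_mk hn (J := primaryComponent n hn) le_sup_left
  have h0 : IsNilpotent (Ideal.Quotient.mk (primaryComponent n hn) (var n 0)) :=
    ⟨2 ^ (n - 1), by
      rw [← map_pow, Ideal.Quotient.eq_zero_iff_mem]
      exact Ideal.mem_sup_right (Ideal.mem_span_singleton_self _)⟩
  obtain ⟨k, hk⟩ := i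
  rw [← var_of_lt hk]
  rcases Nat.eq_zero_or_pos k with rfl | hpos
  · exact h0
  · obtain ⟨u, -, hsq⟩ := exists_sq_eq_pow_mul hc hpos hk
    refine IsNilpotent.of_pow (m := 2) ?_
    rw [hsq]
    exact (Commute.all _ _).isNilpotent_mul_right (h0.pow_of_pos (by positivity))

lemma saturation_eq_primaryComponent :
    Ideal.span {p | ∃ s, eval (fun _ => (0 : ℂ)) s ≠ 0 ∧
        s * p ∈ Ideal.span (Set.range (system n hn))} =
      primaryComponent n hn := by
  apply le_antisymm
  · rw [Ideal.span_le]
    rintro p ⟨s, hs, hsp⟩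
    rw [eval_zero'] at hs
    rw [SetLike.mem_coe, ← Ideal.Quotient.eq_zero_iff_mem]
    have hunit := isUnit_mk_of_constantCoeff_ne_zero (isNilpotent_mk_primaryComponent_X hn) hs
    refine hunit.mul_right_eq_zero.mp ?_
    rw [← map_mul, Ideal.Quotient.eq_zero_iff_mem]
    exact Ideal.mem_sup_left hsp
  · refine sup_le (Ideal.span_mono fun p hp =>
      ⟨1, by simp, by rw [one_mul]; exact Ideal.subset_span hp⟩) ?_
    obtain ⟨u, hu, hmem⟩ := exists_mul_pow_mem_span_system hn
    rw [Ideal.span_singleton_le_iff_mem]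
    exact Ideal.subset_span ⟨u, by simp [eval_zero', hu], hmem⟩

end Ideals

lemma span_pow_mul_pow_eq_top {A : Type*} [CommRing A] [Algebra ℂ A]
    (f : MvPolynomial (Fin n) ℂ →ₐ[ℂ] A) (hf : Function.Surjective f)
    (hc : IsChain n (f ∘ var n)) :
    Submodule.span ℂ (Set.range fun p : ℕ × Fin 2 => f (var n 0) ^ p.1 * f (var n 1) ^ (p.2 : ℕ))
      = ⊤ := by
  set y := f ∘ var n
  set M := Submodule.span ℂ (Set.range fun p : ℕ × Fin 2 => y 0 ^ p.1 * y 1 ^ (p.2 : ℕ))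
  have hgen : ∀ b a, y 0 ^ a * y 1 ^ b ∈ M := by
    intro b
    induction b using Nat.strong_induction_on with
    | _ b ih =>
      intro a
      rcases (show b < 2 ∨ 2 ≤ b by omega) with hb | hb
      · exact Submodule.subset_span ⟨(a, ⟨b, hb⟩), rfl⟩
      · obtain ⟨b, rfl⟩ := Nat.exists_eq_add_of_le' hb
        have : y 0 ^ a * y 1 ^ (b + 2) = y 0 ^ (a + 2) * y 1 ^ b + y 0 ^ (a + 3) * y 1 ^ b := by
          rw [pow_add (y 1), hc.sq_one]
          ring
        rw [this]
        exact add_mem (ih b (by omega) _) (ih b (by omega) _)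
  let Stab : A → Prop := fun a => ∀ m ∈ M, a * m ∈ M
  have stab_of_gen : ∀ a, (∀ i j, a * (y 0 ^ i * y 1 ^ j) ∈ M) → Stab a := by
    intro a ha m hm
    induction hm using Submodule.span_induction with
    | mem x hx => obtain ⟨⟨i, j⟩, rfl⟩ := hx; exact ha i j
    | zero => simp
    | add x z _ _ hx hz => rw [mul_add]; exact add_mem hx hz
    | smul c x _ hx => rw [mul_smul_comm]; exact M.smul_mem c hx
  have stab_mul : ∀ a b, Stab a → Stab b → Stab (a * b) := fun a b ha hb m hm => by
    rw [mul_assoc]; exact ha _ (hb m hm)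
  have stab_add : ∀ a b, Stab a → Stab b → Stab (a + b) := fun a b ha hb m hm => by
    rw [add_mul]; exact add_mem (ha m hm) (hb m hm)
  have stab_algebraMap : ∀ c, Stab (algebraMap ℂ A c) := fun c m hm => by
    rw [← Algebra.smul_def]; exact M.smul_mem c hm
  have stab_var : ∀ k, Stab (y k) := by
    intro k
    induction k using Nat.strong_induction_on with
    | _ k ih =>
      obtain _ | _ | k := k
      · exact stab_of_gen _ fun i j => by rw [← mul_assoc, ← pow_succ']; exact hgen j _
      · exact stab_of_gen _ fun i j => by rw [mul_left_comm, ← pow_succ']; exact hgen _ i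
      · by_cases hk : k + 2 < n
        · rw [hc.succ (k + 1) (by omega) hk]
          have h := ih (k + 1) (by omega)
          exact stab_mul _ _ (by rw [sq]; exact stab_mul _ _ h h)
            (stab_add _ _ (by simpa using stab_algebraMap 1) h)
        · have : y (k + 2) = 0 := by simp [y, var, hk]
          rw [this]
          intro m _
          simp
  have stab_map : ∀ p, Stab (f p) := by
    intro p
    induction p using MvPolynomial.induction_on with
    | C c => rw [← algebraMap_eq, AlgHom.commutes]; exact stab_algebraMap c
    | add p q hp hq => rw [map_add]; exact stab_add _ _ hp hq
    | mul_X p i hp =>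
      rw [map_mul, ← var_of_lt i.2]
      exact stab_mul _ _ hp (stab_var i)
  show M = ⊤
  refine eq_top_iff.mpr fun x _ => ?_
  obtain ⟨p, rfl⟩ := hf x
  simpa using stab_map p 1 (by simpa using hgen 0 0)

lemma linearIndependent_root_pow {R : Type*} [CommRing R] {g : Polynomial R} (hg : g.Monic) :
    LinearIndependent R fun i : Fin g.natDegree => AdjoinRoot.root g ^ (i : ℕ) := by
  have h := (AdjoinRoot.powerBasis' hg).basis.linearIndependent
  rw [PowerBasis.coe_basis] at h
  exact h

section NodeAlgebra

variable (N : ℕ)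

abbrev TruncatedLine := AdjoinRoot (Polynomial.X ^ N : Polynomial ℂ)

/-- `ℂ[t, r] ⧸ (t ^ N, r² - t²(1 + t))`, the local algebra of the node `r² = t² + t³` cut
off at `t ^ N`. -/
abbrev NodeAlgebra :=
  AdjoinRoot (Polynomial.X ^ 2 - Polynomial.C (AdjoinRoot.root _ ^ 2 * (1 + AdjoinRoot.root _)) :
    Polynomial (TruncatedLine N))

def nodeT : NodeAlgebra N := algebraMap (TruncatedLine N) _ (AdjoinRoot.root _)

def nodeR : NodeAlgebra N := AdjoinRoot.root _

lemma nodeT_pow : nodeT N ^ N = 0 := by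
  have h : AdjoinRoot.root (Polynomial.X ^ N : Polynomial ℂ) ^ N = 0 := by
    rw [← AdjoinRoot.mk_X, ← map_pow, AdjoinRoot.mk_self]
  rw [nodeT, ← map_pow, h, map_zero]

lemma nodeR_sq : nodeR N ^ 2 = nodeT N ^ 2 * (1 + nodeT N) := by
  have h := AdjoinRoot.mk_self (f := (Polynomial.X ^ 2 -
    Polynomial.C (AdjoinRoot.root _ ^ 2 * (1 + AdjoinRoot.root _)) : Polynomial (TruncatedLine N)))
  rw [map_sub, sub_eq_zero, map_pow, AdjoinRoot.mk_X, AdjoinRoot.mk_C] at h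
  rw [nodeR, h, nodeT, map_mul, map_pow, map_add, map_one]
  rfl

lemma linearIndependent_nodeT_pow_mul_nodeR_pow (hN : N ≠ 0) :
    LinearIndependent ℂ fun p : Fin N × Fin 2 => nodeT N ^ (p.1 : ℕ) * nodeR N ^ (p.2 : ℕ) := by
  have hT := linearIndependent_root_pow (Polynomial.monic_X_pow (R := ℂ) N)
  rw [Polynomial.natDegree_X_pow] at hT
  have : Nontrivial (TruncatedLine N) := AdjoinRoot.nontrivial _ (by simp [hN])
  have hR := linearIndependent_root_pow (Polynomial.monic_X_pow_sub_C
    (AdjoinRoot.root _ ^ 2 * (1 + AdjoinRoot.root _) : TruncatedLine N) two_ne_zero)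
  rw [Polynomial.natDegree_X_pow_sub_C] at hR
  have hfun : (fun p : Fin N × Fin 2 => nodeT N ^ (p.1 : ℕ) * nodeR N ^ (p.2 : ℕ)) =
      fun p => AdjoinRoot.root (Polynomial.X ^ N : Polynomial ℂ) ^ (p.1 : ℕ) •
        nodeR N ^ (p.2 : ℕ) := by
    ext p
    rw [Algebra.smul_def, nodeT, map_pow]
  have hsmul := linearIndependent_smul hT hR
  rw [hfun]
  exact hsmul

def nodeSeq : ℕ → NodeAlgebra N
  | 0 => nodeT N
  | 1 => nodeR N
  | k + 2 => nodeSeq (k + 1) ^ 2 * (1 + nodeSeq (k + 1))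

end NodeAlgebra

variable (n) in
def nodeMap : MvPolynomial (Fin n) ℂ →ₐ[ℂ] NodeAlgebra (2 ^ (n - 1)) :=
  aeval fun i => nodeSeq _ i

lemma nodeMap_var {k : ℕ} (hk : k < n) : nodeMap n (var n k) = nodeSeq _ k := by
  rw [var_of_lt hk, nodeMap, aeval_X]

section Basis

variable (hn : 2 ≤ n)

include hn in
lemma isChain_nodeMap : IsChain n (nodeMap n ∘ var n) where
  sq_one := by
    simp only [Function.comp_apply, nodeMap_var (show 0 < n by omega),
      nodeMap_var (show 1 < n by omega)]
    exact nodeR_sq _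
  succ k hk0 hk := by
    obtain ⟨k, rfl⟩ : ∃ j, k = j + 1 := ⟨k - 1, by omega⟩
    simp only [Function.comp_apply, nodeMap_var hk, nodeMap_var (show k + 1 < n by omega),
      nodeSeq]

lemma primaryComponent_le_ker_nodeMap :
    primaryComponent n hn ≤ RingHom.ker (nodeMap n) := by
  have ht : nodeMap n (var n 0) ^ 2 ^ (n - 1) = 0 := by
    rw [nodeMap_var (by omega), nodeSeq, nodeT_pow]
  refine sup_le ?_ ?_
  · rw [Ideal.span_le]
    rintro _ ⟨m, rfl⟩
    obtain ⟨u, -, hsq⟩ :=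
      exists_sq_eq_pow_mul (f := (nodeMap n).toRingHom) (isChain_nodeMap hn) (k := n - 1)
        (by omega) (by omega)
    refine (map_system_eq_zero_iff hn (nodeMap n).toRingHom).mpr ⟨isChain_nodeMap hn, ?_⟩ m
    rw [hsq]
    simp [ht]
  · rw [Ideal.span_singleton_le_iff_mem, RingHom.mem_ker, map_pow]
    exact ht

def monomialFamily : Fin (2 ^ (n - 1)) × Fin 2 → MvPolynomial (Fin n) ℂ ⧸ primaryComponent n hn :=
  fun p => Ideal.Quotient.mk _ (var n 0 ^ (p.1 : ℕ) * var n 1 ^ (p.2 : ℕ))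

lemma linearIndependent_monomialFamily : LinearIndependent ℂ (monomialFamily hn) := by
  refine LinearIndependent.of_comp (Ideal.Quotient.liftₐ _ (nodeMap n)
    fun _ h => RingHom.mem_ker.mp (primaryComponent_le_ker_nodeMap hn h)).toLinearMap ?_
  convert linearIndependent_nodeT_pow_mul_nodeR_pow (2 ^ (n - 1)) (by positivity) using 1
  ext p
  change nodeMap n (var n 0 ^ (p.1 : ℕ) * var n 1 ^ (p.2 : ℕ)) = _
  rw [map_mul, map_pow, map_pow, nodeMap_var (by omega), nodeMap_var (by omega), nodeSeq, nodeSeq]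

lemma span_monomialFamily : Submodule.span ℂ (Set.range (monomialFamily hn)) = ⊤ := by
  have hspan := span_pow_mul_pow_eq_top (Ideal.Quotient.mkₐ ℂ (primaryComponent n hn))
    (Ideal.Quotient.mkₐ_surjective ℂ _) (isChain_mk hn le_sup_left).1
  refine eq_top_iff.mpr (hspan.symm.le.trans (Submodule.span_le.mpr ?_))
  rintro _ ⟨⟨a, b⟩, rfl⟩
  by_cases ha : a < 2 ^ (n - 1)
  · exact Submodule.subset_span ⟨(⟨a, ha⟩, b), rfl⟩
  · have h0 : Ideal.Quotient.mk (primaryComponent n hn) (var n 0) ^ a = 0 := by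
      rw [← map_pow, Ideal.Quotient.eq_zero_iff_mem]
      exact Ideal.mem_sup_right (Ideal.mem_span_singleton.mpr (pow_dvd_pow _ (not_lt.mp ha)))
    simp [Ideal.Quotient.mkₐ_eq_mk, h0]

def monomialBasis : Module.Basis (Fin (2 ^ (n - 1)) × Fin 2) ℂ
    (MvPolynomial (Fin n) ℂ ⧸ primaryComponent n hn) :=
  Module.Basis.mk (linearIndependent_monomialFamily hn) (span_monomialFamily hn).ge

lemma finrank_quotient_primaryComponent :
    Module.finrank ℂ (MvPolynomial (Fin n) ℂ ⧸ primaryComponent n hn) = 2 ^ n := by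
  rw [Module.finrank_eq_card_basis (monomialBasis hn), Fintype.card_prod, Fintype.card_fin,
    Fintype.card_fin, ← pow_succ, Nat.sub_add_cancel (by omega)]

lemma mult_span_system :
    mult (Ideal.span (Set.range (system n hn))) 0 = 2 ^ n := by
  obtain ⟨u, hu, hmem⟩ := exists_mul_pow_mem_span_system hn
  obtain ⟨K, hK⟩ := exists_X_pow_mem (isNilpotent_mk_primaryComponent_X hn)
  rw [mult, ← dualSpace_sup_span_singleton hu hmem, ← primaryComponent, finrank_dualSpace_zero hK,
    finrank_quotient_primaryComponent]

end Basis

section Jacobian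

lemma eval_zero_pderiv_var_pow (j : Fin n) (k : ℕ) {e : ℕ} (he : 2 ≤ e) :
    eval 0 (pderiv j (var n k ^ e)) = 0 := by
  obtain ⟨e, rfl⟩ := Nat.exists_eq_add_of_le' he
  simp [eval_zero]

lemma eval_zero_pderiv_var (j : Fin n) {k : ℕ} (hk : k < n) :
    eval 0 (pderiv j (var n k)) = if (j : ℕ) = k then 1 else 0 := by
  rw [var_of_lt hk, pderiv_X]
  simp [Pi.single_apply, Fin.ext_iff, eq_comm]

variable (hn : 2 ≤ n)

lemma eval_zero_pderiv_system (k j : Fin n) :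
    eval 0 (pderiv j (system n hn k)) = if (k : ℕ) ≠ 0 ∧ (j : ℕ) = k + 1 then -1 else 0 := by
  obtain ⟨k, hk⟩ := k
  rcases Nat.eq_zero_or_pos k with rfl | h0
  · rw [system_zero, map_sub, map_add, map_sub, map_add, eval_zero_pderiv_var_pow j 0 le_rfl,
      eval_zero_pderiv_var_pow j 0 (by norm_num), eval_zero_pderiv_var_pow j 1 le_rfl]
    simp
  · rcases (show k + 1 < n ∨ k = n - 1 by omega) with hmid | rfl
    · rw [system_of_pos hn h0 hmid, map_sub, map_add, map_sub, map_add,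
        eval_zero_pderiv_var_pow j k (by norm_num), eval_zero_pderiv_var_pow j k le_rfl,
        eval_zero_pderiv_var j hmid]
      simp [h0.ne', apply_ite]
    · have : (j : ℕ) ≠ n - 1 + 1 := by omega
      rw [system_last, eval_zero_pderiv_var_pow j _ le_rfl]
      simp [this]

lemma ker_jacobian :
    LinearMap.ker (Matrix.mulVecLin
        (Matrix.of fun k j : Fin n => eval 0 (pderiv j (system n hn k)))) =
      ⨅ j ∈ {j : Fin n | 2 ≤ (j : ℕ)}, LinearMap.ker (LinearMap.proj j) := by
  ext v
  simp only [LinearMap.mem_ker, Matrix.mulVecLin_apply, Submodule.mem_iInf, LinearMap.proj_apply,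
    Set.mem_ofPred_eq, funext_iff, Pi.zero_apply, Matrix.mulVec, dotProduct, Matrix.of_apply,
    eval_zero_pderiv_system hn]
  constructor
  · intro hv j hj
    have h := hv ⟨j - 1, by omega⟩
    rwa [Finset.sum_eq_single j (fun j' _ hj' => by simp [Fin.ext_iff] at hj' ⊢; omega)
      (by simp), if_pos (by simp; omega), neg_one_mul, neg_eq_zero] at h
  · intro hv k
    refine Finset.sum_eq_zero fun j _ => ?_
    split_ifs with h
    · rw [hv j (by omega), mul_zero]
    · rw [zero_mul]

lemma finrank_ker_jacobian :
    Module.finrank ℂ (LinearMap.ker (Matrix.mulVecLin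
        (Matrix.of fun k j : Fin n => eval 0 (pderiv j (system n hn k))))) = 2 := by
  classical
  rw [ker_jacobian hn, LinearEquiv.finrank_eq (LinearMap.iInfKerProjEquiv ℂ (fun _ => ℂ)
    (I := {j : Fin n | (j : ℕ) < 2}) (Set.disjoint_left.mpr fun j h1 h2 => by simp at h1 h2; omega)
    (fun j _ => by simp; omega)), Module.finrank_fintype_fun_eq_card]
  exact (Fintype.card_congr (Fin.castLEquiv hn).symm).trans (Fintype.card_fin 2)

end Jacobian

end BreadthTwo

/-- for every `n ≥ 2`, the system
`x₁³+x₁²−x₂², x₂³+x₂²−x₃, …, x_{n−1}³+x_{n−1}²−xₙ, xₙ²` has the origin as an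
isolated root of multiplicity `2ⁿ`, with primal basis
`{x₁^a x₂^b : a < 2^{n−1}, b < 2}` for the local quotient ring, and the corank
of the Jacobian at the origin equals 2 (breadth two). -/
theorem breadth_two_family (n : ℕ) (hn : 2 ≤ n) :
    let fs : Fin n → MvPolynomial (Fin n) ℂ := fun i =>
      if h0 : (i : ℕ) = 0 then
        X (⟨0, by omega⟩ : Fin n) ^ 3 + X (⟨0, by omega⟩ : Fin n) ^ 2
          - X (⟨1, by omega⟩ : Fin n) ^ 2
      else if hl : (i : ℕ) = n - 1 then X i ^ 2
      else X i ^ 3 + X i ^ 2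
        - X (⟨(i : ℕ) + 1, by have := i.isLt; omega⟩ : Fin n)
    let ξ : Fin n → ℂ := fun _ => 0
    let I : Ideal (MvPolynomial (Fin n) ℂ) := Ideal.span (Set.range fs)
    -- the primary component of I at the origin (by saturation)
    let Q : Ideal (MvPolynomial (Fin n) ℂ) :=
      Ideal.span {p | ∃ s, eval ξ s ≠ 0 ∧ s * p ∈ I}
    -- the origin is a root,
    (∀ m, eval ξ (fs m) = 0) ∧
    -- it is isolated,
    (∃ U ∈ nhds ξ, ∀ x ∈ U, (∀ m, eval x (fs m) = 0) → x = ξ) ∧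
    -- it has multiplicity 2ⁿ,
    mult I ξ = 2 ^ n ∧
    -- the monomials x₁^a x₂^b (a < 2^{n−1}, b < 2) are a primal basis,
    (∃ b : Module.Basis (Fin (2 ^ (n - 1)) × Fin 2) ℂ (MvPolynomial (Fin n) ℂ ⧸ Q),
      ∀ p, b p = Ideal.Quotient.mk Q
        (X (⟨0, by omega⟩ : Fin n) ^ (p.1 : ℕ) *
          X (⟨1, by omega⟩ : Fin n) ^ (p.2 : ℕ))) ∧
    -- and the corank of the Jacobian at the origin is 2
    Module.finrank ℂ
      (LinearMap.ker (Matrix.mulVecLin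
        (Matrix.of fun (k j : Fin n) => eval ξ (pderiv j (fs k))))) = 2 := by
  intro fs ξ I Q
  have hQ : Q = BreadthTwo.primaryComponent n hn := BreadthTwo.saturation_eq_primaryComponent hn
  refine ⟨BreadthTwo.eval_zero_system hn, BreadthTwo.exists_nhds_eq_zero_of_eval_system hn,
    BreadthTwo.mult_span_system hn, ?_, BreadthTwo.finrank_ker_jacobian hn⟩
  rw [hQ]
  refine ⟨BreadthTwo.monomialBasis hn, fun p => ?_⟩
  rw [BreadthTwo.monomialBasis, Module.Basis.mk_apply, BreadthTwo.monomialFamily,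
    BreadthTwo.var_of_lt, BreadthTwo.var_of_lt]

end
end
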